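/- arXiv:2308.00641 — 7 statements merged into one kernel-verified Lean document; each statement's English description precedes it below -/
import Mathlib

section
/- If G is an abelian group of finite torsion-free rank with bounded p-torsion for all primes p, and K is a subgroup such that G/K is torsion, then for every prime p the p-primary component of G/K is the direct sum of a divisible group and a bounded group. -/
/-!
Let `P` be the `p`-component of `G ⧸ K`, `r` the rank of `G`, and `p ^ k` a bound for the
`p`-torsion of `G`. Write `r + 1` elements of the socle of `p ^ k P` as `vᵢ = p ^ k • π gᵢ` with
`gᵢ ∈ G`. The `gᵢ` satisfy a relation `∑ cᵢ • gᵢ = s` with coprime integers `cᵢ` and `s` torsion;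
as `p ^ k` kills the `p`-part of `s`, the element `∑ cᵢ • vᵢ = p ^ k • π s` is killed both by `p`
and by an integer prime to `p`, so it vanishes. Hence this socle is an `𝔽_p`-space of dimension at
most `r`, so it is finite and the socles of the `p ^ n P` stabilise. In a `p`-group this forces
`p ^ N P = p ^ (N + 1) P` for large `N`, so `p ^ N P` is divisible, hence a direct summand, and
every complement is killed by `p ^ N`.
-/

open TensorProduct

/-- p-primary torsion subgroup. -/
def pTorsion (G : Type*) [AddCommGroup G] (p : ℕ) : AddSubgroup G where
  carrier := {x | ∃ n : ℕ, p ^ n • x = 0}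
  zero_mem' := ⟨0, by simp⟩
  add_mem' := by
    rintro a b ⟨m, hm⟩ ⟨n, hn⟩
    refine ⟨m + n, ?_⟩
    have ha : p ^ (m + n) • a = 0 := by rw [pow_add, mul_comm, mul_smul, hm, smul_zero]
    have hb : p ^ (m + n) • b = 0 := by rw [pow_add, mul_smul, hn, smul_zero]
    rw [smul_add, ha, hb, add_zero]
  neg_mem' := by
    rintro a ⟨m, hm⟩
    exact ⟨m, by rw [smul_neg, hm, neg_zero]⟩

/-- finite torsion-free rank: the ℚ-dimension of ℚ ⊗ G is finite. -/
def FiniteRank (G : Type*) [AddCommGroup G] : Prop :=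
  Module.rank ℚ (ℚ ⊗[ℤ] G) < Cardinal.aleph0

/-- bounded p-torsion for all primes. -/
def BoundedPTorsion (G : Type*) [AddCommGroup G] : Prop :=
  ∀ p : ℕ, p.Prime → ∃ n : ℕ, ∀ x ∈ pTorsion G p, p ^ n • x = 0

/-- Bassian (via the characterization): finite torsion-free rank and finite p-torsion. -/
def Bassian (G : Type*) [AddCommGroup G] : Prop :=
  FiniteRank G ∧ ∀ p : ℕ, p.Prime → (pTorsion G p : Set G).Finite

/-- elementary: torsion and each p-primary component killed by p. -/
def Elementary (G : Type*) [AddCommGroup G] : Prop :=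
  AddMonoid.IsTorsion G ∧ ∀ p : ℕ, p.Prime → ∀ x ∈ pTorsion G p, p • x = 0

/-- generalized Bassian. -/
def GeneralizedBassian (G : Type*) [AddCommGroup G] : Prop :=
  ∀ N : AddSubgroup G, (∃ f : G →+ G ⧸ N, Function.Injective f) →
    ∃ H : AddSubgroup G, IsCompl N H

theorem Set.exists_forall_ge_eq_of_antitone {α : Type*} {s : ℕ → Set α} (hs : Antitone s)
    (hfin : (s 0).Finite) : ∃ N, ∀ n ≥ N, s n = s N := by
  have hfin' : ∀ n, (s n).Finite := fun n => hfin.subset (hs n.zero_le)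
  obtain ⟨N, hN⟩ := WellFoundedLT.antitone_chain_condition (f := fun n => (s n).ncard)
    fun m n hmn => Set.ncard_le_ncard (hs hmn) (hfin' m)
  exact ⟨N, fun n hn => Set.eq_of_subset_of_ncard_le (hs hn) (hN n hn).le (hfin' N)⟩

def nsmulRange (A : Type*) [AddCommGroup A] (n : ℕ) : AddSubgroup A :=
  (DistribSMul.toAddMonoidHom A n).range

def powSocle (A : Type*) [AddCommGroup A] (p n : ℕ) : AddSubgroup A :=
  nsmulRange A (p ^ n) ⊓ (DistribSMul.toAddMonoidHom A p).ker

def AddSubgroup.IsDivisible {A : Type*} [AddCommGroup A] (D : AddSubgroup A) : Prop :=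
  ∀ n : ℕ, 0 < n → ∀ x ∈ D, ∃ y ∈ D, n • y = x

section PGroup

variable {A : Type*} [AddCommGroup A] {p : ℕ}

@[simp]
theorem mem_nsmulRange {n : ℕ} {x : A} : x ∈ nsmulRange A n ↔ ∃ y, n • y = x :=
  AddMonoidHom.mem_range

theorem mem_powSocle {n : ℕ} {x : A} :
    x ∈ powSocle A p n ↔ x ∈ nsmulRange A (p ^ n) ∧ p • x = 0 :=
  Iff.rfl

theorem nsmulRange_pow_antitone (p : ℕ) : Antitone fun n => nsmulRange A (p ^ n) := by
  intro m n hmn x hx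
  obtain ⟨y, rfl⟩ := mem_nsmulRange.mp hx
  exact mem_nsmulRange.mpr ⟨p ^ (n - m) • y, by rw [smul_smul, ← pow_add, Nat.add_sub_of_le hmn]⟩

theorem powSocle_antitone (p : ℕ) : Antitone fun n => powSocle A p n :=
  fun _ _ hmn => inf_le_inf_right _ (nsmulRange_pow_antitone p hmn)

theorem Nat.Coprime.coprime_addOrderOf {m t : ℕ} {x : A} (hm : m.Coprime p)
    (hx : p ^ t • x = 0) : m.Coprime (addOrderOf x) :=
  (hm.pow_right t).coprime_dvd_right (addOrderOf_dvd_of_nsmul_eq_zero hx)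

theorem eq_zero_of_nsmul_eq_zero_of_coprime {m t : ℕ} {x : A} (hm : m.Coprime p)
    (hx : p ^ t • x = 0) (hmx : m • x = 0) : x = 0 :=
  AddMonoid.addOrderOf_eq_one_iff.mp <|
    (hm.coprime_addOrderOf hx).symm.eq_one_of_dvd (addOrderOf_dvd_of_nsmul_eq_zero hmx)

/-- Induction on the order `p ^ t` of `x ∈ p ^ M A`: subtracting a suitable element of
`p ^ (M + 1) A` moves `x` into the socle of `p ^ M A`. -/
theorem nsmulRange_pow_le_succ (hA : ∀ x : A, ∃ t, p ^ t • x = 0) {N : ℕ}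
    (hsoc : ∀ M ≥ N, powSocle A p M ≤ powSocle A p (M + 1)) :
    ∀ M ≥ N, nsmulRange A (p ^ M) ≤ nsmulRange A (p ^ (M + 1)) := by
  suffices key : ∀ t M, N ≤ M → ∀ x ∈ nsmulRange A (p ^ M), p ^ t • x = 0 →
      x ∈ nsmulRange A (p ^ (M + 1)) by
    intro M hM x hx
    obtain ⟨t, ht⟩ := hA x
    exact key t M hM x hx ht
  intro t
  induction t with
  | zero =>
    intro M _ x _ hx
    rw [pow_zero, one_smul] at hx
    exact hx ▸ zero_mem _
  | succ t ih =>
    intro M hM x hx hpx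
    obtain ⟨y, rfl⟩ := mem_nsmulRange.mp hx
    have hpy : p • p ^ M • y = p ^ (M + 1) • y := by rw [smul_smul, pow_succ']
    obtain ⟨z, hz⟩ := mem_nsmulRange.mp <| ih (M + 1) (by omega) (p • p ^ M • y)
      (mem_nsmulRange.mpr ⟨y, hpy.symm⟩) (by rwa [smul_smul, ← pow_succ])
    have hsocle : p ^ M • y - p ^ (M + 1) • z ∈ powSocle A p M := by
      refine mem_powSocle.mpr
        ⟨sub_mem hx (nsmulRange_pow_antitone p M.le_succ (mem_nsmulRange.mpr ⟨z, rfl⟩)), ?_⟩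
      rw [smul_sub, smul_smul p (p ^ (M + 1)), ← pow_succ', hz, sub_self]
    have := add_mem (mem_powSocle.mp (hsoc M hM hsocle)).1 (mem_nsmulRange.mpr ⟨z, rfl⟩)
    rwa [sub_add_cancel] at this

theorem nsmulRange_pow_add_eq (hA : ∀ x : A, ∃ t, p ^ t • x = 0) {N : ℕ}
    (hsoc : ∀ M ≥ N, powSocle A p M ≤ powSocle A p (M + 1)) (e : ℕ) :
    nsmulRange A (p ^ (N + e)) = nsmulRange A (p ^ N) := by
  induction e with
  | zero => rfl
  | succ e ih =>
    refine le_antisymm (nsmulRange_pow_antitone p (by omega)) ?_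
    exact ih ▸ nsmulRange_pow_le_succ hA hsoc (N + e) (by omega)

theorem isDivisible_nsmulRange_pow (hp : p.Prime) (hA : ∀ x : A, ∃ t, p ^ t • x = 0) {N : ℕ}
    (hC : ∀ e, nsmulRange A (p ^ (N + e)) = nsmulRange A (p ^ N)) :
    (nsmulRange A (p ^ N)).IsDivisible := by
  intro n hn x hx
  set e := n.factorization p
  set m := n / p ^ e
  obtain ⟨y, rfl⟩ := mem_nsmulRange.mp ((hC e).symm ▸ hx)
  have hw : p ^ N • y ∈ nsmulRange A (p ^ N) := mem_nsmulRange.mpr ⟨y, rfl⟩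
  obtain ⟨t, ht⟩ := hA (p ^ N • y)
  obtain ⟨j, hj⟩ := exists_nsmul_eq_self_of_coprime
    ((Nat.coprime_ordCompl hp hn.ne').symm.coprime_addOrderOf ht)
  refine ⟨j • p ^ N • y, AddSubgroup.nsmul_mem _ hw j, ?_⟩
  calc n • j • p ^ N • y = p ^ e • j • m • p ^ N • y := by
        rw [← Nat.ordProj_mul_ordCompl_eq_self n p, mul_nsmul', smul_comm j m]
    _ = p ^ (N + e) • y := by rw [hj, smul_smul, ← pow_add, add_comm]

theorem AddSubgroup.IsDivisible.exists_isCompl {D : AddSubgroup A} (hD : D.IsDivisible) :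
    ∃ B : AddSubgroup A, IsCompl D B := by
  have : DivisibleBy D ℕ := divisibleByOfSMulRightSurj D ℕ fun {n} hn x => by
    obtain ⟨y, hy, hyx⟩ := hD n (Nat.pos_of_ne_zero hn) x x.2
    exact ⟨⟨y, hy⟩, Subtype.ext hyx⟩
  have := AddGroup.divisibleByIntOfDivisibleByNat D
  obtain ⟨r, hr⟩ := (Module.Baer.of_divisible D).extension_property_addMonoidHom D.subtype
    Subtype.val_injective (AddMonoidHom.id D)
  have hproj : ∀ x : D.toIntSubmodule, r.toIntLinearMap x = x := fun x => DFunLike.congr_fun hr x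
  exact ⟨_, AddSubgroup.toIntSubmodule.symm.isCompl (LinearMap.isCompl_of_proj hproj)⟩

theorem exists_isCompl_isDivisible_bounded_of_finite_powSocle (hp : p.Prime)
    (hA : ∀ x : A, ∃ t, p ^ t • x = 0) {k : ℕ} (hfin : (powSocle A p k : Set A).Finite) :
    ∃ D B : AddSubgroup A, IsCompl D B ∧ D.IsDivisible ∧ ∃ n, 0 < n ∧ ∀ x ∈ B, n • x = 0 := by
  obtain ⟨N, hN⟩ := Set.exists_forall_ge_eq_of_antitone
    (s := fun n => (powSocle A p (k + n) : Set A))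
    (fun m n hmn => powSocle_antitone p (Nat.add_le_add_left hmn k)) hfin
  have hstab : ∀ M ≥ k + N, powSocle A p M = powSocle A p (k + N) := fun M hM => by
    have := SetLike.coe_injective (hN (M - k) (by omega))
    rwa [Nat.add_sub_cancel' (by omega)] at this
  have hsoc : ∀ M ≥ k + N, powSocle A p M ≤ powSocle A p (M + 1) := fun M hM =>
    ((hstab M hM).trans (hstab (M + 1) (by omega)).symm).le
  have hD := isDivisible_nsmulRange_pow hp hA (nsmulRange_pow_add_eq hA hsoc)
  obtain ⟨B, hB⟩ := hD.exists_isCompl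
  refine ⟨_, B, hB, hD, p ^ (k + N), pow_pos hp.pos _, fun x hx => ?_⟩
  exact AddSubgroup.disjoint_def.mp hB.disjoint (mem_nsmulRange.mpr ⟨x, rfl⟩)
    (AddSubgroup.nsmul_mem B hx _)

end PGroup

theorem exists_pow_nsmul_eq_zero_of_pTorsion {Q : Type*} [AddCommGroup Q] {p : ℕ}
    (x : pTorsion Q p) : ∃ t, p ^ t • x = 0 := by
  obtain ⟨t, ht⟩ := x.2
  exact ⟨t, Subtype.ext ht⟩

section FiniteRank

variable {G : Type*} [AddCommGroup G]

theorem FiniteRank.rank_int_lt_aleph0 (hG : FiniteRank G) :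
    Module.rank ℤ G < Cardinal.aleph0 := by
  have : IsLocalizedModule (nonZeroDivisors ℤ) (TensorProduct.mk ℤ ℚ G 1) :=
    (isLocalizedModule_iff_isBaseChange (nonZeroDivisors ℤ) ℚ _).mpr
      (TensorProduct.isBaseChange ℤ G ℚ)
  rwa [← IsLocalizedModule.rank_eq (nonZeroDivisors ℤ) le_rfl (TensorProduct.mk ℤ ℚ G 1),
    ← IsFractionRing.rank_right_eq ℤ ℚ]

theorem FiniteRank.exists_gcd_eq_one_isOfFinAddOrder (hG : FiniteRank G) {ι : Type*} [Fintype ι]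
    (g : ι → G) (hι : Module.finrank ℤ G < Fintype.card ι) :
    ∃ c : ι → ℤ, Finset.univ.gcd c = 1 ∧ IsOfFinAddOrder (∑ i, c i • g i) := by
  have hdep : ¬ LinearIndependent ℤ g := fun hg => by
    have := hg.cardinal_lift_le_rank
    rw [Cardinal.mk_fintype, ← Cardinal.cast_toNat_of_lt_aleph0 hG.rank_int_lt_aleph0] at this
    simp only [Cardinal.lift_natCast, Nat.cast_le] at this
    exact hι.not_ge this
  obtain ⟨c₀, hc₀, i, hi⟩ := Fintype.not_linearIndependent_iff.mp hdep
  obtain ⟨c, hc, hgcd⟩ := Finset.extract_gcd c₀ (Finset.univ_nonempty_iff.mpr ⟨i⟩)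
  refine ⟨c, hgcd, isOfFinAddOrder_iff_zsmul_eq_zero.mpr ⟨Finset.univ.gcd c₀, ?_, ?_⟩⟩
  · exact fun h => hi (Finset.gcd_eq_zero_iff.mp h i (Finset.mem_univ i))
  · rw [Finset.smul_sum, ← hc₀]
    exact Finset.sum_congr rfl fun j _ => by rw [smul_smul, ← hc j (Finset.mem_univ j)]

theorem exists_coprime_pow_nsmul_nsmul_eq_zero {p k : ℕ} (hp : p.Prime)
    (hk : ∀ x ∈ pTorsion G p, p ^ k • x = 0) {s : G} (hs : IsOfFinAddOrder s) :
    ∃ m : ℕ, m.Coprime p ∧ p ^ k • m • s = 0 := by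
  set n := addOrderOf s
  refine ⟨n / p ^ n.factorization p, (Nat.coprime_ordCompl hp hs.addOrderOf_pos.ne').symm,
    hk _ ⟨n.factorization p, ?_⟩⟩
  rw [smul_smul, Nat.ordProj_mul_ordCompl_eq_self, addOrderOf_nsmul_eq_zero]

variable {Q : Type*} [AddCommGroup Q] {p k : ℕ}

theorem exists_gcd_eq_one_sum_zsmul_eq_zero (hG : FiniteRank G) (hp : p.Prime)
    (hk : ∀ x ∈ pTorsion G p, p ^ k • x = 0) {f : G →+ Q} (hf : Function.Surjective f)
    {ι : Type*} [Fintype ι] (v : ι → pTorsion Q p) (hv : ∀ i, v i ∈ powSocle _ p k)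
    (hι : Module.finrank ℤ G < Fintype.card ι) :
    ∃ c : ι → ℤ, Finset.univ.gcd c = 1 ∧ ∑ i, c i • v i = 0 := by
  choose b hb using fun i => mem_nsmulRange.mp (mem_powSocle.mp (hv i)).1
  choose g hg using fun i => hf (b i)
  obtain ⟨c, hc, hs⟩ := hG.exists_gcd_eq_one_isOfFinAddOrder g hι
  obtain ⟨m, hm, hms⟩ := exists_coprime_pow_nsmul_nsmul_eq_zero hp hk hs
  refine ⟨c, hc, eq_zero_of_nsmul_eq_zero_of_coprime (t := 1) hm ?_ ?_⟩
  · rw [pow_one, Finset.smul_sum]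
    exact Finset.sum_eq_zero fun i _ => by rw [smul_comm, (mem_powSocle.mp (hv i)).2, smul_zero]
  · apply Subtype.ext
    calc ((m • ∑ i, c i • v i : pTorsion Q p) : Q) = f (p ^ k • m • ∑ i, c i • g i) := by
          simp only [map_nsmul, map_sum, map_zsmul, hg, ← hb, smul_comm (p ^ k) m, Finset.smul_sum,
            smul_comm (p ^ k) (c _)]
          norm_cast
      _ = 0 := by rw [hms, map_zero]

theorem finite_powSocle_pTorsion (hG : FiniteRank G) (hp : p.Prime)
    (hk : ∀ x ∈ pTorsion G p, p ^ k • x = 0) {f : G →+ Q} (hf : Function.Surjective f) :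
    (powSocle (pTorsion Q p) p k : Set (pTorsion Q p)).Finite := by
  set S := powSocle (pTorsion Q p) p k
  have : Module (ZMod p) S := AddCommGroup.zmodModule fun x => Subtype.ext (mem_powSocle.mp x.2).2
  have : Fact p.Prime := ⟨hp⟩
  have hrank : Module.rank (ZMod p) S ≤ Module.finrank ℤ G := rank_le fun s hs => by
    by_contra! hcard
    obtain ⟨c, hc, hsum⟩ := exists_gcd_eq_one_sum_zsmul_eq_zero hG hp hk hf
      (fun i : s => ((i : S) : pTorsion Q p)) (fun i => (i : S).2) (by simpa using hcard)
    obtain ⟨i, hi⟩ : ∃ i, ¬ (p : ℤ) ∣ c i := by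
      by_contra! h
      exact (Nat.prime_iff_prime_int.mp hp).not_dvd_one (hc ▸ Finset.dvd_gcd fun i _ => h i)
    refine Fintype.not_linearIndependent_iff.mpr
      ⟨fun i => (c i : ZMod p), ?_, i, (ZMod.intCast_zmod_eq_zero_iff_dvd _ _).not.mpr hi⟩ hs
    simp_rw [Int.cast_smul_eq_zsmul]
    exact Subtype.ext (by simpa using hsum)
  have : Module.Finite (ZMod p) S := by
    rw [← Module.rank_lt_aleph0_iff]
    exact hrank.trans_lt Cardinal.natCast_lt_aleph0
  exact Set.finite_coe_iff.mp (Module.finite_of_finite (ZMod p))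

end FiniteRank

theorem stmt4_general {G : Type*} [AddCommGroup G] (h1 : FiniteRank G) (h2 : BoundedPTorsion G)
    (K : AddSubgroup G) (p : ℕ) (hp : p.Prime) :
    ∃ D B : AddSubgroup ↥(pTorsion (G ⧸ K) p), IsCompl D B ∧
      (∀ n : ℕ, 0 < n → ∀ x ∈ D, ∃ y ∈ D, n • y = x) ∧
      (∃ n : ℕ, 0 < n ∧ ∀ x ∈ B, n • x = 0) := by
  obtain ⟨k, hk⟩ := h2 p hp
  exact exists_isCompl_isDivisible_bounded_of_finite_powSocle hp
    exists_pow_nsmul_eq_zero_of_pTorsion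
    (finite_powSocle_pTorsion h1 hp hk (QuotientAddGroup.mk'_surjective K))

/-- for G of finite rank with bounded p-torsion and G/K torsion, each
p-primary component of G/K is the direct sum of a divisible group and a bounded group. -/
theorem stmt4 {G : Type*} [AddCommGroup G] (h1 : FiniteRank G) (h2 : BoundedPTorsion G)
    (K : AddSubgroup G) (hK : AddMonoid.IsTorsion (G ⧸ K)) (p : ℕ) (hp : p.Prime) :
    ∃ D B : AddSubgroup ↥(pTorsion (G ⧸ K) p), IsCompl D B ∧
      (∀ n : ℕ, 0 < n → ∀ x ∈ D, ∃ y ∈ D, n • y = x) ∧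
      (∃ n : ℕ, 0 < n ∧ ∀ x ∈ B, n • x = 0) :=
  stmt4_general h1 h2 K p hp
end

section
/- An abelian group G decomposes as a direct sum A ⊕ E with A Bassian and E elementary if and only if G has finite torsion-free rank and pT_p is finite for every prime p, where T_p is the p-primary torsion subgroup of G. -/
open TensorProduct

/-!
By finite rank there is a finite set `s` such that `G / ⟨s⟩` is torsion. For each prime `p`, the
subgroup `Z = G[p] ⊓ (⟨s⟩ + pG)` is finite (it is finite modulo `G[p] ⊓ pG ⊆ pT_p`, and its image
in `G / pG` lies in the image of `⟨s⟩`), so the `𝔽_p`-space `G[p]` splits as `Z ⊕ E_p`, and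
`E_p` has a complement `C_p ⊇ ⟨s⟩ + pG` with `C_p ⊓ T_p` finite. Then `A = ⨅ C_p` and
`E = ⨆ E_p` are complementary: if `n • g ∈ ⟨s⟩` then `g ∈ C_p` for all `p ∤ n`, so only finitely
many `E_p`-components of `g` must be split off. `A` is Bassian since `A ⊓ T_p ≤ C_p ⊓ T_p`, and
`E` is elementary since `p • (E ⊓ T_p) ≤ A ⊓ E = ⊥`. Conversely, a decomposition `A ⊕ E` gives
`rank G = rank A` and `p • T_p(G) = p • T_p(A)`.
-/

open AddSubgroup

section

variable {G M : Type*} [AddCommGroup G] [AddCommGroup M]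

theorem AddSubgroup.mem_of_nsmul_mem_of_coprime {H : AddSubgroup G} {m n : ℕ} (hmn : m.Coprime n)
    {g : G} (hm : m • g ∈ H) (hn : n • g ∈ H) : g ∈ H := by
  obtain ⟨a, b, hab⟩ := hmn.isCoprime
  have hg : g = a • (m • g) + b • (n • g) := by
    rw [← natCast_zsmul, ← natCast_zsmul, smul_smul, smul_smul, ← add_smul, hab, one_smul]
  rw [hg]
  exact add_mem (zsmul_mem hm a) (zsmul_mem hn b)

theorem pTorsion_le_range_nsmul {p q : ℕ} (hpq : p.Coprime q) :
    pTorsion G p ≤ (nsmulAddMonoidHom q : G →+ G).range := by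
  rintro x ⟨n, hn⟩
  exact mem_of_nsmul_mem_of_coprime (hpq.pow_left n) (hn ▸ zero_mem _) ⟨x, rfl⟩

theorem AddSubgroup.coe_mem_pTorsion {A : AddSubgroup G} {p : ℕ} {x : A} :
    (x : G) ∈ pTorsion G p ↔ x ∈ pTorsion A p :=
  exists_congr fun n => by rw [← coe_nsmul, ZeroMemClass.coe_eq_zero]

theorem AddSubgroup.finite_of_finite_map_of_finite_inf_ker {H : AddSubgroup G} (f : G →+ M)
    (hmap : (H.map f : Set M).Finite) (hker : ((H ⊓ f.ker : AddSubgroup G) : Set G).Finite) :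
    (H : Set G).Finite := by
  refine Set.Finite.of_finite_fibers f (s := H) (by rwa [coe_map] at hmap) ?_
  rintro _ ⟨h₀, hh₀, rfl⟩
  refine (hker.image (h₀ + ·)).subset fun h ⟨hh, hfh⟩ =>
    ⟨h - h₀, mem_inf.2 ⟨sub_mem hh hh₀, ?_⟩, by simp⟩
  simpa [sub_eq_zero] using hfh

theorem AddSubgroup.finite_closure_of_nsmul_eq_zero {s : Set G} (hs : s.Finite) {n : ℕ}
    (hn : 0 < n) (hs₀ : ∀ x ∈ s, n • x = 0) : (closure s : Set G).Finite := by
  have := hs.to_subtype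
  have htors : IsAddTorsion (closure s) := fun x => by
    refine isOfFinAddOrder_iff_nsmul_eq_zero.2 ⟨n, hn, Subtype.ext ?_⟩
    refine closure_induction (p := fun y _ => n • y = 0) hs₀ (smul_zero n)
      (fun y z _ _ hy hz => by rw [smul_add, hy, hz, add_zero])
      (fun y _ hy => by rw [smul_neg, hy, neg_zero]) x.2
  have := AddCommGroup.finite_of_fg_isAddTorsion _ htors
  exact Set.toFinite _

/-- A subgroup `C` that is maximal among those with `B ≤ C ≤ H` and `C ⊓ E = ⊥` absorbs every
`h ∈ H`: if `p ∣ k` then `k • h ∈ B`, and otherwise `h` is a combination of `p • h ∈ B` and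
`k • h ∈ C ⊔ E`. -/
theorem AddSubgroup.exists_le_disjoint_sup_eq_of_nsmul_mem {p : ℕ} (hp : p.Prime)
    {B E H : AddSubgroup G} (hBH : B ≤ H) (hEH : E ≤ H) (hpH : ∀ h ∈ H, p • h ∈ B)
    (hBE : Disjoint B E) : ∃ C, B ≤ C ∧ Disjoint C E ∧ C ⊔ E = H := by
  obtain ⟨C, hBC, hC⟩ := zorn_le_nonempty₀ {C | C ≤ H ∧ Disjoint C E}
    (fun c hc hchain D hD => by
      refine ⟨sSup c, ⟨sSup_le fun C hC => (hc hC).1, disjoint_iff_inf_le.2 ?_⟩,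
        fun _ => le_sSup⟩
      rintro x ⟨hxc, hxE⟩
      obtain ⟨C, hC, hxC⟩ := (mem_sSup_of_directedOn ⟨D, hD⟩ hchain.directedOn).1 hxc
      exact (hc hC).2.le_bot ⟨hxC, hxE⟩)
    B ⟨hBH, hBE⟩
  refine ⟨C, hBC, hC.prop.2, le_antisymm (sup_le hC.prop.1 hEH) fun h hh => ?_⟩
  by_contra hhCE
  have hpC : p • h ∈ C := hBC (hpH h hh)
  have hdisj : Disjoint (C ⊔ zmultiples h) E := by
    refine disjoint_iff_inf_le.2 fun x ⟨hx, hxE⟩ => ?_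
    obtain ⟨c, hc, _, ⟨k, rfl⟩, rfl⟩ := mem_sup.1 hx
    by_cases hpk : (p : ℤ) ∣ k
    · obtain ⟨j, rfl⟩ := hpk
      have hkh : ((p : ℤ) * j) • h ∈ C := by
        rw [mul_comm, mul_smul, natCast_zsmul]
        exact zsmul_mem hpC j
      exact hC.prop.2.le_bot ⟨add_mem hc hkh, hxE⟩
    · refine absurd ?_ hhCE
      have hkh : k • h ∈ C ⊔ E := by
        simpa using sub_mem (mem_sup_right hxE) (mem_sup_left hc)
      obtain ⟨a, b, hab⟩ := (Nat.prime_iff_prime_int.1 hp).coprime_iff_not_dvd.2 hpk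
      have hh' : h = a • ((p : ℤ) • h) + b • (k • h) := by
        rw [smul_smul, smul_smul, ← add_smul, hab, one_smul]
      rw [hh', natCast_zsmul]
      exact add_mem (mem_sup_left (zsmul_mem hpC a)) (zsmul_mem hkh b)
  have hle := hC.le_of_ge ⟨sup_le hC.prop.1 (by simpa using hh), hdisj⟩ le_sup_left
  exact hhCE (mem_sup_left (hle (mem_sup_right (mem_zmultiples h))))

theorem rank_rat_tensor_eq_rank_int : Module.rank ℚ (ℚ ⊗[ℤ] G) = Module.rank ℤ G :=
  (IsFractionRing.rank_right_eq ℤ ℚ (ℚ ⊗[ℤ] G)).trans <| by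
    convert IsLocalizedModule.rank_eq (nonZeroDivisors ℤ) le_rfl (TensorProduct.mk ℤ ℚ G 1)
    exact Subsingleton.elim _ _

theorem finiteRank_iff_rank_lt_aleph0 : FiniteRank G ↔ Module.rank ℤ G < Cardinal.aleph0 := by
  rw [FiniteRank, rank_rat_tensor_eq_rank_int]

/-- An independent set `s` of cardinality `rank G` spans `G` up to torsion: by rank–nullity
the quotient by `span s` has rank `0`. -/
theorem exists_finite_nsmul_mem_closure (hG : Module.rank ℤ G < Cardinal.aleph0) :
    ∃ s : Set G, s.Finite ∧ ∀ g : G, ∃ n : ℕ, 0 < n ∧ n • g ∈ closure s := by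
  obtain ⟨s, hs, hind⟩ := exists_set_linearIndependent_of_isDomain ℤ G
  have hquot : Module.rank ℤ (G ⧸ Submodule.span ℤ s) = 0 := by
    have := rank_quotient_add_rank_of_isDomain (Submodule.span ℤ s)
    rw [rank_span_set hind, hs] at this
    exact Cardinal.eq_of_add_eq_add_right (this.trans (zero_add _).symm) hG
  refine ⟨s, Cardinal.mk_lt_aleph0_iff.1 (hs ▸ hG), fun g => ?_⟩
  obtain ⟨a, ha, hag⟩ := rank_eq_zero_iff.1 hquot (Submodule.Quotient.mk g)
  rw [← Submodule.Quotient.mk_smul, Submodule.Quotient.mk_eq_zero,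
    ← Submodule.mem_toAddSubgroup, Submodule.span_int_eq_addSubgroupClosure] at hag
  refine ⟨a.natAbs, Int.natAbs_pos.2 ha, ?_⟩
  rcases Int.natAbs_eq a with h | h <;> rw [← natCast_zsmul]
  · rwa [← h]
  · rw [← neg_neg (a.natAbs : ℤ), ← h, neg_smul]
    exact neg_mem hag

theorem finite_ker_nsmul_inf_sup_range {p : ℕ} (hp : 0 < p) {s : Set G} (hs : s.Finite)
    (hT : ((pTorsion G p).map (nsmulAddMonoidHom p) : Set G).Finite) :
    (((nsmulAddMonoidHom p).ker ⊓ (closure s ⊔ (nsmulAddMonoidHom p).range) :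
      AddSubgroup G) : Set G).Finite := by
  set P := (nsmulAddMonoidHom p : G →+ G).range
  refine finite_of_finite_map_of_finite_inf_ker (QuotientAddGroup.mk' P) ?_ ?_
  · have hfin : (closure s |>.map (QuotientAddGroup.mk' P) : Set (G ⧸ P)).Finite := by
      rw [AddMonoidHom.map_closure]
      refine finite_closure_of_nsmul_eq_zero (hs.image _) hp ?_
      rintro _ ⟨g, -, rfl⟩
      rw [← map_nsmul, QuotientAddGroup.mk'_apply, QuotientAddGroup.eq_zero_iff]
      exact ⟨g, rfl⟩
    refine hfin.subset ((map_mono inf_le_right).trans ?_)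
    rw [AddSubgroup.map_sup, (AddSubgroup.map_eq_bot_iff _).2 (QuotientAddGroup.ker_mk' P).ge,
      sup_bot_eq]
  · refine hT.subset fun x hx => ?_
    obtain ⟨⟨hxK, -⟩, hxP⟩ := mem_inf.1 hx
    obtain ⟨y, rfl⟩ := (QuotientAddGroup.ker_mk' P).le hxP
    refine ⟨y, ⟨2, ?_⟩, rfl⟩
    simpa [pow_two, mul_smul] using hxK

/-- `E` is a complement of `Z = G[p] ⊓ (⟨s⟩ + pG)` inside `G[p]`, and `C` a complement of `E`
containing `⟨s⟩ + pG`. Then `C ⊓ T_p` is finite: multiplication by `p` maps it into `pT_p`, and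
its kernel `C ⊓ G[p]` embeds into `G[p] / E ≅ Z`. -/
theorem exists_isCompl_of_finite_nsmul_pTorsion {p : ℕ} (hp : p.Prime) {s : Set G} (hs : s.Finite)
    (hT : ((pTorsion G p).map (nsmulAddMonoidHom p) : Set G).Finite) :
    ∃ C E : AddSubgroup G, IsCompl C E ∧ (∀ x ∈ E, p • x = 0) ∧ closure s ≤ C ∧
      (∀ g : G, p • g ∈ C) ∧ ((C ⊓ pTorsion G p : AddSubgroup G) : Set G).Finite := by
  set K := (nsmulAddMonoidHom p : G →+ G).ker
  set P := (nsmulAddMonoidHom p : G →+ G).range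
  have hZ := finite_ker_nsmul_inf_sup_range hp.pos hs hT
  set Z := K ⊓ (closure s ⊔ P)
  obtain ⟨E, -, hEZ, hEK⟩ := exists_le_disjoint_sup_eq_of_nsmul_mem hp bot_le inf_le_left
    (fun _ hh => mem_bot.2 hh) (disjoint_bot_left (a := Z))
  have hEK' : E ≤ K := hEK ▸ le_sup_left
  obtain ⟨C, hC, hCE, hCE'⟩ := exists_le_disjoint_sup_eq_of_nsmul_mem hp le_top le_top
    (B := closure s ⊔ P) (E := E) (fun g _ => mem_sup_right ⟨g, rfl⟩)
    (disjoint_iff_inf_le.2 fun x ⟨hx, hxE⟩ =>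
      hEZ.le_bot ⟨hxE, hEK' hxE, hx⟩)
  refine ⟨C, E, ⟨hCE, codisjoint_iff.2 hCE'⟩, fun _ hx => hEK' hx,
    le_sup_left.trans hC, fun g => hC (mem_sup_right ⟨g, rfl⟩), ?_⟩
  have hCK : ((C ⊓ K : AddSubgroup G) : Set G).Finite := by
    refine finite_of_finite_map_of_finite_inf_ker (QuotientAddGroup.mk' E) ?_ ?_
    · refine (hZ.image (QuotientAddGroup.mk' E)).subset ?_
      rintro _ ⟨x, hx, rfl⟩
      obtain ⟨e, he, z, hz, rfl⟩ := mem_sup.1 (hEK.ge (mem_inf.1 hx).2)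
      exact ⟨z, hz, by simp [(QuotientAddGroup.eq_zero_iff e).2 he]⟩
    · refine (Set.finite_singleton 0).subset fun x hx => ?_
      obtain ⟨⟨hxC, -⟩, hxE⟩ := mem_inf.1 hx
      exact hCE.le_bot ⟨hxC, (QuotientAddGroup.ker_mk' E).le hxE⟩
  refine finite_of_finite_map_of_finite_inf_ker (nsmulAddMonoidHom p) ?_ ?_
  · exact hT.subset (map_mono inf_le_right)
  · exact hCK.subset (inf_le_inf_right _ inf_le_left)

theorem AddSubgroup.mem_iSup_iff_exists_finsupp {ι : Type*} (E : ι → AddSubgroup G) (x : G) :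
    x ∈ ⨆ i, E i ↔ ∃ f : ι →₀ G, (∀ i, f i ∈ E i) ∧ (f.sum fun _ y => y) = x := by
  change x ∈ toIntSubmodule (⨆ i, E i) ↔ _
  rw [OrderIso.map_iSup]
  exact Submodule.mem_iSup_iff_exists_finsupp _ x

section Family

variable {ι : Type*} {C E : ι → AddSubgroup G}

theorem disjoint_iInf_iSup_of_isCompl (hCE : ∀ i, IsCompl (C i) (E i))
    (hEC : ∀ i j, i ≠ j → E i ≤ C j) : Disjoint (⨅ i, C i) (⨆ i, E i) := by
  classical
  refine disjoint_iff_inf_le.2 fun x ⟨hxC, hxE⟩ => ?_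
  obtain ⟨f, hf, rfl⟩ := (mem_iSup_iff_exists_finsupp E x).1 hxE
  suffices f = 0 by simp [this]
  ext i
  have hrest : ((f.erase i).sum fun _ y => y) ∈ C i :=
    sum_mem fun j hj => by
      rw [Finsupp.support_erase, Finset.mem_erase] at hj
      rw [Finsupp.erase_ne hj.1]
      exact hEC j i hj.1 (hf j)
  have hfi : f i ∈ C i := by
    have := sub_mem (mem_iInf.1 hxC i) hrest
    rwa [← Finsupp.add_sum_erase' f i _ fun _ => rfl, add_sub_cancel_right] at this
  exact (hCE i).disjoint.le_bot ⟨hfi, hf i⟩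

theorem mem_iInf_sup_iSup_of_isCompl (hCE : ∀ i, IsCompl (C i) (E i))
    (hEC : ∀ i j, i ≠ j → E i ≤ C j) (s : Finset ι) {g : G} (hg : ∀ i ∉ s, g ∈ C i) :
    g ∈ (⨅ i, C i) ⊔ ⨆ i, E i := by
  classical
  choose c hc e he hce using fun i => mem_sup.1 ((hCE i).codisjoint.eq_top ▸ mem_top g)
  refine mem_sup.2 ⟨g - ∑ i ∈ s, e i, mem_iInf.2 fun i => ?_, ∑ i ∈ s, e i,
    sum_mem fun i _ => mem_iSup_of_mem i (he i), sub_add_cancel _ _⟩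
  by_cases hi : i ∈ s
  · have hrest : ∑ j ∈ s.erase i, e j ∈ C i :=
      sum_mem fun j hj => hEC j i (Finset.ne_of_mem_erase hj) (he j)
    rw [← Finset.sum_erase_add s e hi, ← hce i, add_sub_add_right_eq_sub]
    exact sub_mem (hc i) hrest
  · exact sub_mem (hg i hi) (sum_mem fun j hj => hEC j i (ne_of_mem_of_not_mem hj hi) (he j))

end Family

theorem bassian_of_finite_inf_pTorsion {A : AddSubgroup G}
    (hG : Module.rank ℤ G < Cardinal.aleph0)
    (hA : ∀ p : ℕ, p.Prime → ((A ⊓ pTorsion G p : AddSubgroup G) : Set G).Finite) :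
    Bassian A := by
  refine ⟨finiteRank_iff_rank_lt_aleph0.2 ((LinearMap.rank_le_of_injective
    A.subtype.toIntLinearMap Subtype.val_injective).trans_lt hG), fun p hp => ?_⟩
  exact ((hA p hp).preimage Subtype.val_injective.injOn).subset
    fun x hx => ⟨x.2, coe_mem_pTorsion.2 hx⟩

theorem elementary_of_forall_nsmul_eq_zero {E : AddSubgroup G}
    (htors : ∀ x ∈ E, IsOfFinAddOrder x)
    (hE : ∀ p : ℕ, p.Prime → ∀ x ∈ E, x ∈ pTorsion G p → p • x = 0) : Elementary E :=
  ⟨fun x => AddSubmonoid.isOfFinAddOrder_coe.1 (htors x x.2), fun p hp x hx =>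
    Subtype.ext (by simpa using hE p hp x x.2 (coe_mem_pTorsion.2 hx))⟩

theorem rank_le_rank_of_codisjoint_of_isAddTorsion {A E : AddSubgroup G} (h : Codisjoint A E)
    (hE : IsAddTorsion E) : Module.rank ℤ G ≤ Module.rank ℤ A := by
  set E' := E.toIntSubmodule
  have hE' : Module.rank ℤ E' = 0 := rank_eq_zero_iff.2 fun x => by
    obtain ⟨n, hn, hnx⟩ := isOfFinAddOrder_iff_nsmul_eq_zero.1 (hE ⟨x, x.2⟩)
    refine ⟨n, by exact_mod_cast hn.ne', Subtype.ext ?_⟩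
    simpa using congrArg Subtype.val hnx
  have hsurj : Function.Surjective (E'.mkQ ∘ₗ A.subtype.toIntLinearMap) := by
    rintro ⟨g⟩
    obtain ⟨a, ha, e, he, rfl⟩ := mem_sup.1 (h.eq_top ▸ mem_top g)
    refine ⟨⟨a, ha⟩, (Submodule.Quotient.eq E').2 ?_⟩
    simpa using (show e ∈ E' from he)
  calc Module.rank ℤ G = Module.rank ℤ (G ⧸ E') + Module.rank ℤ E' :=
        (rank_quotient_add_rank_of_isDomain E').symm
    _ ≤ Module.rank ℤ A := by
        rw [hE', add_zero]
        exact LinearMap.rank_le_of_surjective _ hsurj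

theorem nsmul_eq_zero_of_disjoint {A E : AddSubgroup G} (h : Disjoint A E) {a e : G} (ha : a ∈ A)
    (he : e ∈ E) {n : ℕ} (hn : n • (a + e) = 0) : n • a = 0 ∧ n • e = 0 := by
  have hna : n • a = -(n • e) := eq_neg_of_add_eq_zero_left (by rwa [← smul_add])
  have : n • a = 0 := h.le_bot (mem_inf.2 ⟨nsmul_mem ha n, hna ▸ neg_mem (nsmul_mem he n)⟩)
  exact ⟨this, by simpa [this] using hna⟩

theorem finite_map_nsmul_pTorsion_of_isCompl {A E : AddSubgroup G} (h : IsCompl A E) {p : ℕ}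
    (hA : (pTorsion A p : Set A).Finite) (hE : ∀ x ∈ pTorsion E p, p • x = 0) :
    ((pTorsion G p).map (nsmulAddMonoidHom p) : Set G).Finite := by
  refine (hA.image fun a : A => p • (a : G)).subset ?_
  rintro _ ⟨y, ⟨n, hn⟩, rfl⟩
  obtain ⟨a, ha, e, he, rfl⟩ := mem_sup.1 (h.codisjoint.eq_top ▸ mem_top y)
  obtain ⟨hna, hne⟩ := nsmul_eq_zero_of_disjoint h.disjoint ha he hn
  have hpe : p • e = 0 := by
    simpa using congrArg Subtype.val (hE ⟨e, he⟩ (coe_mem_pTorsion.1 ⟨n, hne⟩))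
  exact ⟨⟨a, ha⟩, coe_mem_pTorsion.1 ⟨n, hna⟩, by simp [hpe]⟩

theorem exists_isCompl_bassian_elementary (hG : Module.rank ℤ G < Cardinal.aleph0)
    (hT : ∀ p : ℕ, p.Prime → ((pTorsion G p).map (nsmulAddMonoidHom p) : Set G).Finite) :
    ∃ A E : AddSubgroup G, IsCompl A E ∧ Bassian A ∧ Elementary E := by
  obtain ⟨s, hs, hGs⟩ := exists_finite_nsmul_mem_closure hG
  choose C E hCE hE hsC hpC hCT using
    fun p : {p : ℕ // p.Prime} => exists_isCompl_of_finite_nsmul_pTorsion p.prop hs (hT p p.prop)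
  have hTC : ∀ p q : {p : ℕ // p.Prime}, p ≠ q → pTorsion G p ≤ C q := fun p q hpq =>
    (pTorsion_le_range_nsmul ((Nat.coprime_primes p.2 q.2).2 (Subtype.coe_ne_coe.2 hpq))).trans
      (by rintro _ ⟨g, rfl⟩; exact hpC q g)
  have hEC : ∀ p q, p ≠ q → E p ≤ C q := fun p q hpq x hx =>
    hTC p q hpq ⟨1, by simpa using hE p x hx⟩
  have hdisj := disjoint_iInf_iSup_of_isCompl hCE hEC
  refine ⟨⨅ p, C p, ⨆ p, E p, ⟨hdisj, codisjoint_iff.2 (eq_top_iff.2 fun g _ => ?_)⟩,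
    bassian_of_finite_inf_pTorsion hG fun p hp => ?_,
    elementary_of_forall_nsmul_eq_zero (fun x hx => ?_) fun p hp x hx hxp => ?_⟩
  · obtain ⟨n, hn, hng⟩ := hGs g
    refine mem_iInf_sup_iSup_of_isCompl hCE hEC (n.primeFactors.subtype Nat.Prime)
      fun q hq => mem_of_nsmul_mem_of_coprime ?_ (hpC q g) (hsC q hng)
    rw [Finset.mem_subtype, Nat.mem_primeFactors] at hq
    exact (Nat.Prime.coprime_iff_not_dvd q.prop).2 fun hqn => hq ⟨q.prop, hqn, hn.ne'⟩
  · exact (hCT ⟨p, hp⟩).subset (SetLike.coe_subset_coe.2 (inf_le_inf_right _ (iInf_le C _)))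
  · have hEtors : ⨆ p, E p ≤ AddCommGroup.torsion G := iSup_le fun p x hx =>
      isOfFinAddOrder_iff_nsmul_eq_zero.2 ⟨p, p.2.pos, hE p x hx⟩
    exact hEtors hx
  · refine hdisj.le_bot ⟨mem_iInf.2 fun q => ?_, nsmul_mem hx p⟩
    by_cases hpq : (⟨p, hp⟩ : {p : ℕ // p.Prime}) = q
    · exact hpq ▸ hpC _ x
    · exact hTC _ q hpq (nsmul_mem hxp p)

end

/-- G = A ⊕ E with A Bassian and E elementary iff G has finite
torsion-free rank and pT_p is finite for all primes p. -/
theorem stmt5 {G : Type*} [AddCommGroup G] :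
    (∃ A E : AddSubgroup G, IsCompl A E ∧ Bassian ↥A ∧ Elementary ↥E) ↔
      (FiniteRank G ∧ ∀ p : ℕ, p.Prime →
        {x : G | ∃ y ∈ pTorsion G p, x = p • y}.Finite) := by
  have hset (p : ℕ) : {x : G | ∃ y ∈ pTorsion G p, x = p • y} =
      ((pTorsion G p).map (nsmulAddMonoidHom p) : Set G) := by
    ext
    simp [eq_comm]
  simp only [hset, finiteRank_iff_rank_lt_aleph0]
  constructor
  · rintro ⟨A, E, h, hA, hE⟩
    exact ⟨(rank_le_rank_of_codisjoint_of_isAddTorsion h.codisjoint hE.1).trans_lt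
      (finiteRank_iff_rank_lt_aleph0.1 hA.1),
      fun p hp => finite_map_nsmul_pTorsion_of_isCompl h (hA.2 p hp) (hE.2 p hp)⟩
  · rintro ⟨hG, hT⟩
    exact exists_isCompl_bassian_elementary hG hT
end

section
/- Every generalized Bassian abelian group has finite torsion-free rank. -/
open TensorProduct

/-!
If `ℚ ⊗ G` is infinite dimensional, `G` contains a free subgroup `F = ⊕ ℤ vₙ` of countable rank.
Map `F` onto the countable divisible group `D = ℚ^(ℕ)` and let `N ≤ F` be the kernel, so that
`G ⧸ N` contains `F ⧸ N ≅ D`. By divisibility of `D`, the coefficientwise embedding `F ↪ D` minus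
the quotient map `F → D` extends to `δ : G → D`, and `g ↦ (g mod N) + δ g` is an injective map
`G → G ⧸ N`. If `N` were a summand, a complement would embed `G ⧸ N`, hence `D`, into `G`, with image
in `F + N = F`; but a free abelian group has no nonzero divisible subgroup.
-/

open Function Submodule LinearMap

theorem Module.Baer.of_module_rat (D : Type*) [AddCommGroup D] [Module ℚ D] :
    Module.Baer ℤ D := by
  let _ : DivisibleBy D ℤ := divisibleByOfSMulRightSurj D ℤ fun {n} hn x =>
    ⟨(n : ℚ)⁻¹ • x, by
      show n • _ = x
      rw [← Int.cast_smul_eq_zsmul ℚ, smul_inv_smul₀ (Int.cast_ne_zero.mpr hn)]⟩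
  exact Module.Baer.of_divisible D

theorem AddMonoidHom.eq_zero_of_module_rat {D : Type*} [AddCommGroup D] [Module ℚ D]
    (f : D →+ ℤ) : f = 0 := by
  ext x
  set n : ℤ := (f x).natAbs + 1
  have hn : (n : ℚ) ≠ 0 := by positivity
  have hdvd : n ∣ f x := ⟨f ((n : ℚ)⁻¹ • x), by
    rw [← smul_eq_mul, ← map_zsmul, ← Int.cast_smul_eq_zsmul ℚ, smul_inv_smul₀ hn]⟩
  exact Int.eq_zero_of_dvd_of_natAbs_lt_natAbs hdvd (by omega)

theorem LinearMap.eq_zero_of_module_rat {D ι : Type*} [AddCommGroup D] [Module ℚ D]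
    (θ : D →ₗ[ℤ] ι →₀ ℤ) : θ = 0 := by
  ext x i
  exact DFunLike.congr_fun ((Finsupp.lapply i ∘ₗ θ).toAddMonoidHom.eq_zero_of_module_rat) x

theorem GeneralizedBassian.exists_rightInverse_mkQ {G : Type*} [AddCommGroup G]
    (hG : GeneralizedBassian G) (N : Submodule ℤ G) (f : G →ₗ[ℤ] G ⧸ N) (hf : Injective f) :
    ∃ s : G ⧸ N →ₗ[ℤ] G, N.mkQ ∘ₗ s = LinearMap.id := by
  obtain ⟨H, hNH⟩ := hG N.toAddSubgroup ⟨f.toAddMonoidHom, hf⟩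
  have hc : IsCompl N H.toIntSubmodule := by
    simpa using AddSubgroup.toIntSubmodule.isCompl hNH
  exact ⟨H.toIntSubmodule.subtype ∘ₗ (N.quotientEquivOfIsCompl _ hc).toLinearMap,
    LinearMap.ext (N.mk_quotientEquivOfIsCompl_apply hc)⟩

section QuotientByImageOfKernel

variable {G P D : Type*} [AddCommGroup G] [AddCommGroup P] [AddCommGroup D]
  (φ : P →ₗ[ℤ] G) {q : P →ₗ[ℤ] D} (hq : Surjective q)

noncomputable def quotientMapOfSurjective : D →ₗ[ℤ] G ⧸ (ker q).map φ :=
  (ker q).mapQ _ φ (le_comap_map φ _) ∘ₗ (q.quotKerEquivOfSurjective hq).symm.toLinearMap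

theorem quotientMapOfSurjective_apply (a : P) :
    quotientMapOfSurjective φ hq (q a) = mkQ _ (φ a) := by
  simp [quotientMapOfSurjective, quotKerEquivOfSurjective_symm_apply]

variable {φ}

theorem mem_range_of_mkQ_eq_quotientMapOfSurjective {g : G} {x : D}
    (hx : mkQ _ g = quotientMapOfSurjective φ hq x) : g ∈ range φ := by
  obtain ⟨a, rfl⟩ := hq x
  rw [quotientMapOfSurjective_apply, mkQ_apply, mkQ_apply, Submodule.Quotient.eq] at hx
  simpa using add_mem (map_le_range hx) (mem_range_self φ a)

theorem quotientMapOfSurjective_injective (hφ : Injective φ) :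
    Injective (quotientMapOfSurjective φ hq) := by
  refine (injective_iff_map_eq_zero _).mpr fun x hx => ?_
  obtain ⟨a, rfl⟩ := hq x
  rw [quotientMapOfSurjective_apply, mkQ_apply, Quotient.mk_eq_zero] at hx
  obtain ⟨a', ha', haa'⟩ := mem_map.mp hx
  exact hφ haa' ▸ ha'

theorem injective_mkQ_add_comp {j : P →ₗ[ℤ] D} (hj : Injective j) (hφ : Injective φ)
    {δ : G →ₗ[ℤ] D} (hδ : δ ∘ₗ φ = j - q) :
    Injective (((ker q).map φ).mkQ + quotientMapOfSurjective φ hq ∘ₗ δ) := by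
  refine (injective_iff_map_eq_zero _).mpr fun g hg => ?_
  have hg' : mkQ _ g = quotientMapOfSurjective φ hq (-δ g) := by
    rw [map_neg, ← add_eq_zero_iff_eq_neg.mp hg]
  obtain ⟨a, rfl⟩ := mem_range_of_mkQ_eq_quotientMapOfSurjective hq hg'
  -- split `j a = q a + (j a - q a)`: the two summands are the two terms of the map at `φ a`
  have hja : quotientMapOfSurjective φ hq (j a) = 0 := by
    rw [← add_sub_cancel (q a) (j a), map_add, quotientMapOfSurjective_apply, ← LinearMap.sub_apply,
      ← hδ]
    exact hg
  rw [(map_eq_zero_iff _ (quotientMapOfSurjective_injective hq hφ)).mp hja |>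
    (map_eq_zero_iff _ hj).mp, map_zero]

end QuotientByImageOfKernel

theorem LinearMap.eq_zero_of_range_le_range_finsupp {D G ι : Type*} [AddCommGroup D]
    [Module ℚ D] [AddCommGroup G] (ψ : D →ₗ[ℤ] G) {φ : (ι →₀ ℤ) →ₗ[ℤ] G} (hφ : Injective φ)
    (h : range ψ ≤ range φ) : ψ = 0 := by
  let e := LinearEquiv.ofInjective φ hφ
  have hθ : e.symm.toLinearMap ∘ₗ ψ.codRestrict _ (fun x => h (mem_range_self ψ x)) = 0 :=
    eq_zero_of_module_rat _
  ext x
  simpa [e] using congr_arg (fun y => (e y : G)) (DFunLike.congr_fun hθ x)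

theorem not_generalizedBassian_of_injective {G D : Type*} [AddCommGroup G] [AddCommGroup D]
    [Module ℚ D] [Countable D] {φ : (ℕ →₀ ℤ) →ₗ[ℤ] G} (hφ : Injective φ)
    {j : (ℕ →₀ ℤ) →ₗ[ℤ] D} (hj : Injective j) : ¬ GeneralizedBassian G := by
  intro hG
  have : Nontrivial D := hj.nontrivial
  obtain ⟨e, he⟩ := exists_surjective_nat D
  have hq : Surjective (Finsupp.linearCombination ℤ e) := fun x => by
    obtain ⟨n, rfl⟩ := he x
    exact ⟨Finsupp.single n 1, by simp⟩
  obtain ⟨δ, hδ⟩ := (Module.Baer.of_module_rat D).extension_property φ hφ (j - _)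
  obtain ⟨s, hs⟩ := hG.exists_rightInverse_mkQ _ _ (injective_mkQ_add_comp hq hj hφ hδ)
  have hs_inj : Injective s := LeftInverse.injective (DFunLike.congr_fun hs)
  have hψ : s ∘ₗ quotientMapOfSurjective φ hq = 0 :=
    (s ∘ₗ quotientMapOfSurjective φ hq).eq_zero_of_range_le_range_finsupp hφ <| by
      rintro _ ⟨x, rfl⟩
      exact mem_range_of_mkQ_eq_quotientMapOfSurjective hq (DFunLike.congr_fun hs _)
  obtain ⟨x, hx⟩ := exists_ne (0 : D)
  exact hx <| (quotientMapOfSurjective_injective hq hφ) <| hs_inj <| by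
    simpa using DFunLike.congr_fun hψ x

theorem exists_linearIndependent_nat_of_not_finiteRank {G : Type*} [AddCommGroup G]
    (h : ¬ FiniteRank G) : ∃ v : ℕ → G, LinearIndependent ℤ v := by
  let b := Module.Free.chooseBasis ℚ (ℚ ⊗[ℤ] G)
  have : Infinite (Module.Free.ChooseBasisIndex ℚ (ℚ ⊗[ℤ] G)) := by
    by_contra hfin
    have := not_infinite_iff_finite.mp hfin
    have := Module.Finite.of_basis b
    exact h (Module.rank_lt_aleph0 _ _)
  have hv : LinearIndependent ℤ (b ∘ Infinite.natEmbedding _) :=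
    (b.linearIndependent.comp _ (Infinite.natEmbedding _).injective).restrict_scalars' ℤ
  exact IsLocalizedModule.linearIndependent_lift (nonZeroDivisors ℤ) (TensorProduct.mk ℤ ℚ G 1) hv

theorem not_generalizedBassian_of_linearIndependent {G : Type*} [AddCommGroup G] {v : ℕ → G}
    (hv : LinearIndependent ℤ v) : ¬ GeneralizedBassian G :=
  not_generalizedBassian_of_injective (D := ℕ →₀ ℚ) hv
    (j := (Finsupp.mapRange.addMonoidHom (Int.castAddHom ℚ)).toIntLinearMap)
    (Finsupp.mapRange_injective _ (map_zero _) Int.cast_injective)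

/-- every generalized Bassian group has finite torsion-free rank. -/
theorem stmt8 {G : Type*} [AddCommGroup G] (h : GeneralizedBassian G) :
    FiniteRank G := by
  by_contra hG
  obtain ⟨v, hv⟩ := exists_linearIndependent_nat_of_not_finiteRank hG
  exact not_generalizedBassian_of_linearIndependent hv h
end

section
/- Suppose G = A ⊕ B is an abelian group decomposition and M is a subgroup of G such that the projection π: G → B is injective on M and π(M) is a direct summand of B. Then M is a direct summand of G. -/
open TensorProduct

/-!
If `K` is a complement of `π(M)` in `B`, then `A ⊕ K` is a complement of `M`. An `m ∈ M ∩ (A ⊕ K)`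
has `π m ∈ π(M) ∩ K = 0`, so `m = 0` by injectivity of `π` on `M`. Every `g` is `(g - π g) + π g`
with `g - π g ∈ A` and `π g = π m + k`, and `π m - m ∈ A`; hence `M + (A ⊕ K) = G`.
-/

namespace AddSubgroup

variable {G : Type*} [AddCommGroup G] {A B K M : AddSubgroup G} {π : G →+ G}

theorem map_mem_and_sub_map_mem_of_isCompl (hAB : IsCompl A B) (hπA : ∀ a ∈ A, π a = 0)
    (hπB : ∀ b ∈ B, π b = b) (x : G) : π x ∈ B ∧ x - π x ∈ A := by
  obtain ⟨a, ha, b, hb, rfl⟩ := mem_sup.mp (hAB.sup_eq_top ▸ mem_top x : x ∈ A ⊔ B)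
  have hπx : π (a + b) = b := by rw [map_add, hπA a ha, hπB b hb, zero_add]
  rw [hπx, add_sub_cancel_right]
  exact ⟨hb, ha⟩

theorem disjoint_sup_of_map_inf_eq_bot (hπA : ∀ a ∈ A, π a = 0) (hπK : ∀ k ∈ K, π k = k)
    (hinj : ∀ m ∈ M, π m = 0 → m = 0) (hMK : M.map π ⊓ K = ⊥) : Disjoint M (A ⊔ K) := by
  rw [disjoint_def]
  intro m hm hmAK
  obtain ⟨a, ha, k, hk, rfl⟩ := mem_sup.mp hmAK
  have hπm : π (a + k) = k := by rw [map_add, hπA a ha, hπK k hk, zero_add]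
  have hmem : π (a + k) ∈ M.map π ⊓ K := ⟨mem_map_of_mem π hm, by rwa [hπm]⟩
  rw [hMK, mem_bot] at hmem
  exact hinj _ hm hmem

theorem codisjoint_sup_of_sub_map_mem (hA : ∀ x, x - π x ∈ A) (hK : ∀ x, π x ∈ M.map π ⊔ K) :
    Codisjoint M (A ⊔ K) := by
  rw [codisjoint_iff, eq_top_iff]
  intro g _
  obtain ⟨_, ⟨m, hm, rfl⟩, k, hk, hgmk⟩ := mem_sup.mp (hK g)
  have hm' : π m - m ∈ A := by simpa using neg_mem (hA m)
  have hg : g = m + ((g - π g) + (π m - m) + k) := by rw [← hgmk]; abel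
  rw [hg]
  exact add_mem_sup hm
    (add_mem (mem_sup_left (add_mem (hA g) hm')) (mem_sup_right hk))

end AddSubgroup

/-- if G = A ⊕ B, π is the projection onto B with kernel A, π is
injective on M and π(M) is a summand of B, then M is a summand of G. -/
theorem stmt10 {G : Type*} [AddCommGroup G] (A B : AddSubgroup G) (hAB : IsCompl A B)
    (π : G →+ G) (hπA : ∀ a ∈ A, π a = 0) (hπB : ∀ b ∈ B, π b = b)
    (M : AddSubgroup G)
    (hinj : ∀ m ∈ M, π m = 0 → m = 0)
    (hsum : M.map π ≤ B ∧ ∃ K : AddSubgroup G, K ≤ B ∧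
      (M.map π) ⊓ K = ⊥ ∧ (M.map π) ⊔ K = B) :
    ∃ H : AddSubgroup G, IsCompl M H := by
  obtain ⟨-, K, hKB, hMK_inf, hMK_sup⟩ := hsum
  have hdecomp := AddSubgroup.map_mem_and_sub_map_mem_of_isCompl hAB hπA hπB
  exact ⟨A ⊔ K,
    AddSubgroup.disjoint_sup_of_map_inf_eq_bot hπA (fun k hk => hπB k (hKB hk)) hinj hMK_inf,
    AddSubgroup.codisjoint_sup_of_sub_map_mem (fun x => (hdecomp x).2)
      (fun x => hMK_sup ▸ (hdecomp x).1)⟩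
end

section
/- Let S be a torsion abelian group with no nonzero elementary direct summands, and let G = A ⊕ S. If E is an elementary subgroup of G that is a direct summand of G, then the projection of every element of E onto S lands in the complement, and consequently E is isomorphic to a direct summand of A. In particular, S[p] ⊆ pS holds for each prime p. -/
open TensorProduct

/-!
If `p • s = 0` but `s ∉ pS`, a linear functional on the `ZMod p`-vector space `S ⧸ pS` sending
`s` to `1` yields a retraction of `S` onto `⟨s⟩`, an elementary summand; hence `S[p] ⊆ pS`.
Now let `x ∈ E` with `p • x = 0`, write `(0, x.2) = p • (0, t)` and decompose `(0, t) = e + h`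
along `E ⊕ H`. Then `p² • e ∈ E ⊓ H` vanishes, so `p • e = 0` as `E` is elementary, and
`(0, x.2) = p • h ∈ H`. An elementary group is generated by its elements of prime order, so this
holds on all of `E`. Consequently `fst` is injective on `E`, and its image is complemented in `A`
by `{a | (a, 0) ∈ H}`.
-/

theorem AddMonoidHom.isCompl_ker_of_proj {G : Type*} [AddCommGroup G] {K : AddSubgroup G}
    (φ : G →+ K) (hφ : ∀ x : K, φ x = x) : IsCompl K φ.ker := by
  constructor
  · rw [AddSubgroup.disjoint_def]
    intro x hxK hx
    exact congrArg Subtype.val ((hφ ⟨x, hxK⟩).symm.trans hx)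
  · rw [codisjoint_iff, eq_top_iff]
    intro x _
    refine AddSubgroup.mem_sup.mpr ⟨φ x, (φ x).2, x - φ x, ?_, add_sub_cancel _ _⟩
    rw [AddMonoidHom.mem_ker, map_sub, hφ, sub_self]

theorem exists_isCompl_zmultiples_of_not_dvd {S : Type*} [AddCommGroup S] {p : ℕ} (hp : p.Prime)
    {s : S} (hs : p • s = 0) (hdiv : ∀ t : S, p • t ≠ s) :
    ∃ K : AddSubgroup S, IsCompl (AddSubgroup.zmultiples s) K := by
  have := Fact.mk hp
  have hs0 : ModN.mkQ p s ≠ 0 := by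
    intro h
    obtain ⟨t, ht⟩ := (Submodule.Quotient.mk_eq_zero _).mp h
    exact hdiv t (by simpa using ht)
  obtain ⟨f, hf⟩ := Module.Projective.exists_dual_eq_one (ZMod p) hs0
  let s' : AddSubgroup.zmultiples s := ⟨s, AddSubgroup.mem_zmultiples s⟩
  let ψ : ZMod p →+ AddSubgroup.zmultiples s :=
    ZMod.lift p ⟨zmultiplesHom _ s', Subtype.ext (by simp [s', hs])⟩
  let φ := ψ.comp (f.toAddMonoidHom.comp (ModN.mkQ p))
  have hφs : φ s = s' := by
    simpa [φ, hf] using ZMod.lift_coe p ⟨zmultiplesHom _ s', _⟩ 1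
  refine ⟨φ.ker, φ.isCompl_ker_of_proj ?_⟩
  rintro ⟨_, k, rfl⟩
  rw [map_zsmul, hφs]
  rfl

theorem elementary_of_forall_nsmul_eq_zero_s12 {G : Type*} [AddCommGroup G] {p : ℕ} (hp : p.Prime)
    (h : ∀ x : G, p • x = 0) : Elementary G := by
  refine ⟨fun x => isOfFinAddOrder_iff_nsmul_eq_zero.mpr ⟨p, hp.pos, h x⟩, ?_⟩
  rintro q hq x ⟨n, hn⟩
  rcases eq_or_ne q p with rfl | hqp
  · exact h x
  · have hco : Nat.Coprime (q ^ n) p := ((Nat.coprime_primes hq hp).mpr hqp).pow_left n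
    rw [AddMonoid.addOrderOf_eq_one_iff.mp (Nat.eq_one_of_dvd_coprimes hco
      (addOrderOf_dvd_of_nsmul_eq_zero hn) (addOrderOf_dvd_of_nsmul_eq_zero (h x))), smul_zero]

theorem exists_nsmul_eq_of_forall_elementary_summand_eq_bot {S : Type*} [AddCommGroup S]
    (hS : ∀ E : AddSubgroup S, (∃ H, IsCompl E H) → Elementary E → E = ⊥)
    {p : ℕ} (hp : p.Prime) {s : S} (hs : p • s = 0) : ∃ t : S, p • t = s := by
  by_contra! hdiv
  have hkill : ∀ x : AddSubgroup.zmultiples s, p • x = 0 := by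
    rintro ⟨_, k, rfl⟩
    exact Subtype.ext (by simp [smul_comm p k s, hs])
  have hbot := hS _ (exists_isCompl_zmultiples_of_not_dvd hp hs hdiv)
    (elementary_of_forall_nsmul_eq_zero_s12 hp hkill)
  rw [AddSubgroup.zmultiples_eq_bot] at hbot
  exact hdiv 0 (by rw [hbot, smul_zero])

theorem Elementary.mem_of_forall_prime {G : Type*} [AddCommGroup G] (hG : Elementary G)
    (K : AddSubgroup G) (hK : ∀ p : ℕ, p.Prime → ∀ x : G, p • x = 0 → x ∈ K) (x : G) : x ∈ K := by
  obtain ⟨n, hn, hnx⟩ := isOfFinAddOrder_iff_nsmul_eq_zero.mp (hG.1 x)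
  induction n using Nat.recOnPrimeCoprime generalizing x with
  | zero => exact absurd hn (lt_irrefl 0)
  | prime_pow p k hp => exact hK p hp x (hG.2 p hp x ⟨k, hnx⟩)
  | coprime a b ha hb hab iha ihb =>
    have hxa : a • x ∈ K := ihb (a • x) (by omega) (by rw [← mul_smul, mul_comm, hnx])
    have hxb : b • x ∈ K := iha (b • x) (by omega) (by rw [← mul_smul, hnx])
    have hx : x = Nat.gcdA a b • a • x + Nat.gcdB a b • b • x :=
      calc x = ((a.gcd b : ℕ) : ℤ) • x := by rw [hab, Nat.cast_one, one_zsmul]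
        _ = _ := by
          rw [Nat.gcd_eq_gcd_ab, add_smul, mul_comm (a : ℤ), mul_comm (b : ℤ), mul_smul, mul_smul,
            natCast_zsmul, natCast_zsmul]
    rw [hx]
    exact K.add_mem (K.zsmul_mem hxa _) (K.zsmul_mem hxb _)

theorem IsCompl.nsmul_mem_right_of_elementary {G : Type*} [AddCommGroup G] {E H : AddSubgroup G}
    (hEH : IsCompl E H) (hE : Elementary E) {p : ℕ} (hp : p.Prime) {z : G}
    (hz : p • p • z = 0) : p • z ∈ H := by
  obtain ⟨e, he, h, hh, rfl⟩ := AddSubgroup.mem_sup.mp (hEH.sup_eq_top ▸ AddSubgroup.mem_top z)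
  have hppe : p • p • e = 0 := by
    refine AddSubgroup.disjoint_def.mp hEH.disjoint (E.nsmul_mem (E.nsmul_mem he p) p) ?_
    have hsum : p • p • e + p • p • h = 0 := by rwa [← smul_add, ← smul_add]
    rw [eq_neg_of_add_eq_zero_left hsum]
    exact H.neg_mem (H.nsmul_mem (H.nsmul_mem hh p) p)
  have hpe : p • e = 0 := congrArg Subtype.val
    (hE.2 p hp ⟨e, he⟩ ⟨2, Subtype.ext (by simp [pow_two, mul_smul, hppe])⟩)
  rw [smul_add, hpe, zero_add]
  exact H.nsmul_mem hh p

section Prod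

variable {A S : Type*} [AddCommGroup A] [AddCommGroup S] {E H : AddSubgroup (A × S)}

theorem inr_snd_mem_of_isCompl_of_elementary
    (hS : ∀ p : ℕ, p.Prime → ∀ s : S, p • s = 0 → ∃ t : S, p • t = s)
    (hEH : IsCompl E H) (hE : Elementary E) {x : A × S} (hx : x ∈ E) : ((0 : A), x.2) ∈ H := by
  let K : AddSubgroup E :=
    H.comap ((AddMonoidHom.inr A S).comp ((AddMonoidHom.snd A S).comp E.subtype))
  refine hE.mem_of_forall_prime K (fun p hp e he => ?_) ⟨x, hx⟩
  obtain ⟨t, ht⟩ := hS p hp (e : A × S).2 (congrArg (fun y : E => (y : A × S).2) he)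
  have hpt : ((0 : A), (e : A × S).2) = p • ((0 : A), t) := by simp [ht]
  show ((0 : A), (e : A × S).2) ∈ H
  rw [hpt]
  refine hEH.nsmul_mem_right_of_elementary hE hp ?_
  rw [← hpt]
  simpa using congrArg (fun y : E => (y : A × S).2) he

theorem isCompl_map_fst_comap_inl (hEH : IsCompl E H) (h : ∀ x ∈ E, ((0 : A), x.2) ∈ H) :
    IsCompl (E.map (AddMonoidHom.fst A S)) (H.comap (AddMonoidHom.inl A S)) := by
  constructor
  · rw [AddSubgroup.disjoint_def]
    rintro _ ⟨x, hx, rfl⟩ hxH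
    have : x ∈ H := by
      simpa using H.add_mem hxH (h x hx)
    simp [AddSubgroup.disjoint_def.mp hEH.disjoint hx this]
  · rw [codisjoint_iff, eq_top_iff]
    intro a _
    obtain ⟨e, he, y, hy, hey⟩ :=
      AddSubgroup.mem_sup.mp (hEH.sup_eq_top ▸ AddSubgroup.mem_top ((a, 0) : A × S))
    refine AddSubgroup.mem_sup.mpr ⟨e.1, ⟨e, he, rfl⟩, y.1, ?_, congrArg Prod.fst hey⟩
    have hye : y.2 + e.2 = 0 := by simpa [add_comm] using congrArg Prod.snd hey
    show (y.1, (0 : S)) ∈ H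
    rw [show ((y.1, 0) : A × S) = y + ((0 : A), e.2) from Prod.ext (add_zero _).symm hye.symm]
    exact H.add_mem hy (h e he)

theorem nonempty_addEquiv_map_fst (hEH : IsCompl E H) (h : ∀ x ∈ E, ((0 : A), x.2) ∈ H) :
    Nonempty (E ≃+ E.map (AddMonoidHom.fst A S)) := by
  have hinj : Function.Injective ((AddMonoidHom.fst A S).comp E.subtype) := by
    rw [injective_iff_map_eq_zero]
    rintro ⟨x, hx⟩ hx1
    have hxH : x ∈ H := by
      rw [show x = ((0 : A), x.2) from Prod.ext hx1 rfl]
      exact h x hx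
    exact Subtype.ext (AddSubgroup.disjoint_def.mp hEH.disjoint hx hxH)
  have hrange : ((AddMonoidHom.fst A S).comp E.subtype).range = E.map (AddMonoidHom.fst A S) := by
    rw [AddMonoidHom.range_comp, AddSubgroup.range_subtype]
  exact ⟨(AddMonoidHom.ofInjective hinj).trans (AddEquiv.addSubgroupCongr hrange)⟩

end Prod

theorem stmt12_general {A S : Type*} [AddCommGroup A] [AddCommGroup S]
    (hS' : ∀ E : AddSubgroup S, (∃ H, IsCompl E H) → Elementary ↥E → E = ⊥)
    (E H : AddSubgroup (A × S)) (hEH : IsCompl E H) (hE : Elementary ↥E) :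
    (∀ x ∈ E, ((0 : A), (x.2 : S)) ∈ H) ∧
    (∃ E' : AddSubgroup A, (∃ H', IsCompl E' H') ∧ Nonempty (↥E ≃+ ↥E')) ∧
    (∀ p : ℕ, p.Prime → ∀ s : S, p • s = 0 → ∃ t : S, p • t = s) := by
  have hdiv : ∀ p : ℕ, p.Prime → ∀ s : S, p • s = 0 → ∃ t : S, p • t = s :=
    fun _ hp _ hs => exists_nsmul_eq_of_forall_elementary_summand_eq_bot hS' hp hs
  have hsnd : ∀ x ∈ E, ((0 : A), x.2) ∈ H :=
    fun _ hx => inr_snd_mem_of_isCompl_of_elementary hdiv hEH hE hx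
  exact ⟨hsnd, ⟨_, ⟨_, isCompl_map_fst_comap_inl hEH hsnd⟩, nonempty_addEquiv_map_fst hEH hsnd⟩, hdiv⟩

/-- if S is torsion with no nonzero elementary summands and
E ⊕ H = A ⊕ S with E elementary, then the S-component of every element of E lies in H,
E is isomorphic to a summand of A, and S[p] ⊆ pS for each prime p. -/
theorem stmt12 {A S : Type*} [AddCommGroup A] [AddCommGroup S]
    (hS : AddMonoid.IsTorsion S)
    (hS' : ∀ E : AddSubgroup S, (∃ H, IsCompl E H) → Elementary ↥E → E = ⊥)
    (E H : AddSubgroup (A × S)) (hEH : IsCompl E H) (hE : Elementary ↥E) :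
    (∀ x ∈ E, ((0 : A), (x.2 : S)) ∈ H) ∧
    (∃ E' : AddSubgroup A, (∃ H', IsCompl E' H') ∧ Nonempty (↥E ≃+ ↥E')) ∧
    (∀ p : ℕ, p.Prime → ∀ s : S, p • s = 0 → ∃ t : S, p • t = s) :=
  stmt12_general hS' E H hEH hE
end

section
/- Let T be a torsion abelian group such that each p-primary component T_p is bounded. Then the quotient (∏_p T_p)/(⊕_p T_p) of the product of the p-primary components by their direct sum is torsion-free and divisible. -/
open TensorProduct

/-- the subgroup of finitely supported elements of a product. -/
def finSupp (ι : Type*) (T : ι → Type*) [∀ i, AddCommGroup (T i)] :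
    AddSubgroup (∀ i, T i) where
  carrier := {f | {i | f i ≠ 0}.Finite}
  zero_mem' := by simp
  add_mem' := by
    intro a b ha hb
    refine Set.Finite.subset (Set.Finite.union ha hb) ?_
    intro i hi
    by_contra hc
    simp only [Set.mem_union, Set.mem_setOf_eq, not_or, not_not, ne_eq] at hc
    exact hi (by show a i + b i = 0; rw [hc.1, hc.2, add_zero])
  neg_mem' := by
    intro a ha
    refine Set.Finite.subset ha ?_
    intro i hi
    simp only [Set.mem_setOf_eq] at hi ⊢
    intro h0
    exact hi (by show -a i = 0; rw [h0, neg_zero])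

/-! If `p ∤ n`, multiplication by `n` is an automorphism of `T_p`, because `T_p` is killed by a
power of `p`. So on `∏ T_p` it is bijective on all but the finitely many coordinates with `p ∣ n`,
and those coordinates are invisible modulo `⊕ T_p`. -/

theorem nsmul_bijective_of_coprime {G : Type*} [AddCommGroup G] {m n : ℕ}
    (hm : ∀ x : G, m • x = 0) (hmn : m.Coprime n) :
    Function.Bijective (fun x : G => n • x) := by
  obtain ⟨a, b, hab⟩ := Nat.isCoprime_iff_coprime.mpr hmn
  have hinv : ∀ x : G, b • n • x = x := fun x => by
    calc b • n • x = a • m • x + b • n • x := by rw [hm, smul_zero, zero_add]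
      _ = x := by rw [← natCast_zsmul, ← natCast_zsmul (n := n), smul_smul, smul_smul,
          ← add_smul, hab, one_smul]
  refine Function.bijective_iff_has_inverse.mpr ⟨fun x => b • x, hinv, fun x => ?_⟩
  simp only [smul_comm n b, hinv]

theorem Nat.setOf_prime_dvd_finite {n : ℕ} (hn : n ≠ 0) :
    {p : {p : ℕ // p.Prime} | (p : ℕ) ∣ n}.Finite :=
  n.primeFactors.finite_toSet.preimage Subtype.val_injective.injOn |>.subset
    fun p hp => Nat.mem_primeFactors.mpr ⟨p.2, hp, hn⟩

section finSupp

variable {ι : Type*} {T : ι → Type*} [∀ i, AddCommGroup (T i)]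

theorem mem_finSupp {f : ∀ i, T i} : f ∈ finSupp ι T ↔ {i | f i ≠ 0}.Finite := Iff.rfl

theorem quotient_finSupp_eq_zero_of_nsmul_eq_zero {n : ℕ} {S : Set ι} (hS : S.Finite)
    (h : ∀ i ∉ S, Function.Injective (fun x : T i => n • x))
    {x : (∀ i, T i) ⧸ finSupp ι T} (hx : n • x = 0) : x = 0 := by
  obtain ⟨f, rfl⟩ := QuotientAddGroup.mk_surjective x
  rw [← QuotientAddGroup.mk_nsmul, QuotientAddGroup.eq_zero_iff, mem_finSupp] at hx
  rw [QuotientAddGroup.eq_zero_iff, mem_finSupp]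
  refine (hx.union hS).subset fun i hi => ?_
  by_contra! hc
  simp only [Set.mem_union, Set.mem_ofPred_eq, not_or, not_not] at hc
  exact hi (h i hc.2 (by simpa using hc.1))

theorem quotient_finSupp_nsmul_surjective {n : ℕ} {S : Set ι} (hS : S.Finite)
    (h : ∀ i ∉ S, Function.Surjective (fun x : T i => n • x)) :
    Function.Surjective (fun x : (∀ i, T i) ⧸ finSupp ι T => n • x) := by
  classical
  intro y
  obtain ⟨f, rfl⟩ := QuotientAddGroup.mk_surjective y
  let g : ∀ i, T i := fun i => if hi : i ∈ S then 0 else Function.surjInv (h i hi) (f i)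
  refine ⟨g, ?_⟩
  simp only [← QuotientAddGroup.mk_nsmul, QuotientAddGroup.eq, mem_finSupp]
  refine hS.subset fun i hi => ?_
  by_contra hiS
  exact hi (by simp [g, hiS, Function.surjInv_eq (h i hiS)])

end finSupp

theorem stmt14_general (T : {p : ℕ // p.Prime} → Type*) [∀ p, AddCommGroup (T p)]
    (hbdd : ∀ p, ∃ n : ℕ, ∀ x : T p, (p : ℕ) ^ n • x = 0) :
    (∀ x : (∀ p, T p) ⧸ finSupp _ T, x ≠ 0 → ¬ IsOfFinAddOrder x) ∧
    (∀ n : ℕ, 0 < n →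
      Function.Surjective (fun x : (∀ p, T p) ⧸ finSupp _ T => n • x)) := by
  have hbij (n : ℕ) (p : {p : ℕ // p.Prime}) (hp : p ∉ {p : {p : ℕ // p.Prime} | (p : ℕ) ∣ n}) :
      Function.Bijective (fun x : T p => n • x) := by
    obtain ⟨k, hk⟩ := hbdd p
    exact nsmul_bijective_of_coprime hk ((Nat.Prime.coprime_iff_not_dvd p.2).mpr hp |>.pow_left k)
  refine ⟨fun x hx hfin => ?_, fun n hn => ?_⟩
  · obtain ⟨n, hn, hnx⟩ := isOfFinAddOrder_iff_nsmul_eq_zero.mp hfin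
    exact hx (quotient_finSupp_eq_zero_of_nsmul_eq_zero
      (Nat.setOf_prime_dvd_finite hn.ne') (fun p hp => (hbij n p hp).1) hnx)
  · exact quotient_finSupp_nsmul_surjective (Nat.setOf_prime_dvd_finite hn.ne')
      fun p hp => (hbij n p hp).2

/-- for a family of bounded p-primary groups indexed by the primes,
(∏ T_p)/(⊕ T_p) is torsion-free and divisible. -/
theorem stmt14 (T : {p : ℕ // p.Prime} → Type*) [∀ p, AddCommGroup (T p)]
    (hprim : ∀ p, ∀ x : T p, ∃ n : ℕ, (p : ℕ) ^ n • x = 0)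
    (hbdd : ∀ p, ∃ n : ℕ, ∀ x : T p, (p : ℕ) ^ n • x = 0) :
    (∀ x : (∀ p, T p) ⧸ finSupp _ T, x ≠ 0 → ¬ IsOfFinAddOrder x) ∧
    (∀ n : ℕ, 0 < n →
      Function.Surjective (fun x : (∀ p, T p) ⧸ finSupp _ T => n • x)) :=
  stmt14_general T hbdd
end

section
/- Suppose A is a Bassian abelian group containing a free subgroup F with A/F torsion such that for every prime p, the natural map on 0-th Ulm invariants U^0_F(p) → U^0_A(p) (induced by inclusion with the height valuation) is an isomorphism (F is 0-tight). Then every elementary direct summand of A is finite. -/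
open TensorProduct

/-- the p-height of an element, valued in ℕ∞ (∞ for elements divisible by all
powers of p). -/
noncomputable def pHeight {G : Type*} [AddCommGroup G] (p : ℕ) (x : G) : ℕ∞ :=
  ⨆ n ∈ {n : ℕ | ∃ y : G, p ^ n • y = x}, (n : ℕ∞)

/-- F ⊆ A (with the height valuation inherited from A) is 0-tight: for each prime p,
the natural map U^0_F(p) → U^0_A(p) of 0-th Ulm invariants induced by inclusion is an
isomorphism, i.e. (injectivity being automatic) each class of the 0-th Ulm invariant
of A is represented modulo pA by an element of F lying in the 0-th Ulm invariant
of F. -/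
def ZeroTight {A : Type*} [AddCommGroup A] (F : AddSubgroup A) : Prop :=
  ∀ p : ℕ, p.Prime → ∀ x : A, 2 ≤ pHeight p (p • x) →
    ∃ f ∈ F, 2 ≤ pHeight p (p • f) ∧ ∃ y : A, p • y = x - f

/-!
A free subgroup of a group of finite torsion-free rank is finitely generated, so its image
under a projection `π` onto the summand `E` is a finitely generated torsion group, killed by
some `N ≠ 0`. Zero-tightness writes each `a ∈ E` with `p a = 0` as `p y + f` with `f ∈ F`;
applying `π` gives `N a ∈ p E`. In an elementary group `E[p] ∩ p E = 0`, so `N E` has no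
element of prime order (for `p ∤ N` by the above, for `p ∣ N` because `N E ⊆ p E`), i.e.
`N E = 0`. Hence `E` lies in `{x | N x = 0}`, which is finite since every `p`-primary
component of `A` is.
-/

theorem FiniteRank.of_injective {G H : Type*} [AddCommGroup G] [AddCommGroup H] {f : G →+ H}
    (hf : Function.Injective f) (hH : FiniteRank H) : FiniteRank G := by
  have hinj : Function.Injective (f.toIntLinearMap.baseChange ℚ) := by
    rw [LinearMap.baseChange_eq_ltensor]
    exact Module.Flat.lTensor_preserves_injective_linearMap _ hf
  rw [FiniteRank, ← Cardinal.lift_lt_aleph0] at hH ⊢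
  exact (LinearMap.lift_rank_le_of_injective _ hinj).trans_lt hH

theorem Module.Finite.of_free_of_finiteRank {G : Type*} [AddCommGroup G] [Module.Free ℤ G]
    (hG : FiniteRank G) : Module.Finite ℤ G := by
  rwa [FiniteRank, Module.rank_baseChange, Cardinal.lift_lt_aleph0,
    Module.rank_lt_aleph0_iff] at hG

theorem exists_nsmul_map_eq_zero {G T : Type*} [AddCommGroup G] [AddCommGroup T] [AddGroup.FG G]
    (hT : IsAddTorsion T) (φ : G →+ T) : ∃ N ≠ 0, ∀ g, N • φ g = 0 := by
  have : Finite φ.range := AddCommGroup.finite_of_fg_isAddTorsion _ (hT.addSubgroup _)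
  refine ⟨AddMonoid.exponent φ.range, AddMonoid.exponent_ne_zero_of_finite, fun g => ?_⟩
  exact congrArg Subtype.val (AddMonoid.exponent_nsmul_eq_zero (⟨φ g, g, rfl⟩ : φ.range))

theorem exists_retraction_of_isCompl {A : Type*} [AddCommGroup A] {E H : AddSubgroup A}
    (h : IsCompl E H) : ∃ π : A →+ E, ∀ a : E, π a = a :=
  ⟨((AddSubgroup.toIntSubmodule E).projectionOnto _
      (AddSubgroup.toIntSubmodule.isCompl h)).toAddMonoidHom,
    fun a => Submodule.projectionOnto_apply_left (p := AddSubgroup.toIntSubmodule E) _ a⟩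

theorem le_pHeight_of_smul_eq {G : Type*} [AddCommGroup G] {p n : ℕ} {x y : G}
    (h : p ^ n • y = x) : (n : ℕ∞) ≤ pHeight p x :=
  le_iSup₂_of_le (f := fun (n : ℕ) (_ : n ∈ {n : ℕ | ∃ y : G, p ^ n • y = x}) => (n : ℕ∞))
    n ⟨y, h⟩ le_rfl

theorem ZeroTight.exists_eq_smul_add {A : Type*} [AddCommGroup A] {F : AddSubgroup A}
    (hF : ZeroTight F) {p : ℕ} (hp : p.Prime) {a : A} (ha : p • a = 0) :
    ∃ y, ∃ f ∈ F, a = p • y + f := by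
  obtain ⟨f, hf, -, y, hy⟩ := hF p hp a (by rw [ha]; exact le_pHeight_of_smul_eq (smul_zero _))
  exact ⟨y, f, hf, by rw [hy, sub_add_cancel]⟩

theorem eq_zero_of_coprime_of_nsmul_eq_zero {G : Type*} [AddMonoid G] {m n : ℕ} (h : m.Coprime n)
    {x : G} (hm : m • x = 0) (hn : n • x = 0) : x = 0 := by
  rw [← AddMonoid.addOrderOf_eq_one_iff, ← Nat.dvd_one, ← h.gcd_eq_one]
  exact Nat.dvd_gcd (addOrderOf_dvd_of_nsmul_eq_zero hm) (addOrderOf_dvd_of_nsmul_eq_zero hn)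

theorem IsOfFinAddOrder.eq_zero_of_forall_prime {G : Type*} [AddMonoid G] {y : G}
    (hy : IsOfFinAddOrder y) (h : ∀ p : ℕ, p.Prime → ∀ k : ℕ, p • k • y = 0 → k • y = 0) :
    y = 0 := by
  by_contra hy0
  obtain ⟨p, hp, k, hk⟩ :=
    Nat.exists_prime_and_dvd (mt AddMonoid.addOrderOf_eq_one_iff.mp hy0)
  have hk0 : 0 < k := Nat.pos_of_mul_pos_left (hk ▸ hy.addOrderOf_pos)
  have hky : k • y = 0 := h p hp k (by rw [smul_smul, ← hk, addOrderOf_nsmul_eq_zero])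
  have := addOrderOf_le_of_nsmul_eq_zero hk0 hky
  nlinarith [hp.two_le]

theorem Elementary.smul_eq_zero_of_smul_smul_eq_zero {G : Type*} [AddCommGroup G]
    (hG : Elementary G) {p : ℕ} (hp : p.Prime) {e : G} (he : p • p • e = 0) : p • e = 0 := by
  obtain ⟨k, c, hpc, hc⟩ :=
    Nat.exists_eq_pow_mul_and_not_dvd (hG.1 e).addOrderOf_pos.ne' p hp.ne_one
  have hce : p • c • e = 0 :=
    hG.2 p hp _ ⟨k, by rw [smul_smul, ← hc, addOrderOf_nsmul_eq_zero]⟩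
  exact eq_zero_of_coprime_of_nsmul_eq_zero (hp.coprime_iff_not_dvd.mpr hpc) he
    (by rwa [smul_comm])

theorem Elementary.nsmul_eq_zero {G : Type*} [AddCommGroup G] (hG : Elementary G) {N : ℕ}
    (hN : ∀ p : ℕ, p.Prime → ∀ a : G, p • a = 0 → ∃ e, N • a = p • e) (x : G) : N • x = 0 := by
  refine (hG.1 _).eq_zero_of_forall_prime fun p hp k hpa => ?_
  rw [smul_comm k N x] at hpa ⊢
  by_cases hpN : p ∣ N
  · obtain ⟨M, rfl⟩ := hpN
    rw [mul_smul] at hpa ⊢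
    exact hG.smul_eq_zero_of_smul_smul_eq_zero hp hpa
  · obtain ⟨e, he⟩ := hN p hp _ hpa
    have hNa : N • N • k • x = 0 := by
      rw [he, hG.smul_eq_zero_of_smul_smul_eq_zero hp (by rw [← he, smul_comm, hpa, smul_zero])]
    exact eq_zero_of_coprime_of_nsmul_eq_zero (hp.coprime_iff_not_dvd.mpr hpN) hpa hNa

theorem finite_setOf_nsmul_eq_zero {A : Type*} [AddCommGroup A]
    (hA : ∀ p : ℕ, p.Prime → (pTorsion A p : Set A).Finite) {n : ℕ} (hn : n ≠ 0) :
    {x : A | n • x = 0}.Finite := by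
  induction n using Nat.recOnMul with
  | zero => exact absurd rfl hn
  | one => simp
  | prime p hp => exact (hA p hp).subset fun x hx => ⟨1, by simpa using hx⟩
  | mul a b ha hb =>
    obtain ⟨ha0, hb0⟩ := mul_ne_zero_iff.mp hn
    have hfiber : ∀ y : A, ((b • ·) ⁻¹' {y} : Set A).Finite := by
      intro y
      rcases (((b • ·) ⁻¹' {y} : Set A)).eq_empty_or_nonempty with h | ⟨x₀, hx₀⟩
      · simp [h]
      · refine ((hb hb0).image (· + x₀)).subset fun x hx => ⟨x - x₀, ?_, sub_add_cancel x x₀⟩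
        simp_all [smul_sub]
    simpa only [Set.preimage, Set.mem_ofPred_eq, mul_smul] using
      (ha ha0).preimage' fun y _ => hfiber y

theorem stmt17_general {A : Type*} [AddCommGroup A] (hA : Bassian A) (F : AddSubgroup A)
    (hfree : Module.Free ℤ ↥F) (htight : ZeroTight F) :
    ∀ E : AddSubgroup A, (∃ H, IsCompl E H) → Elementary ↥E → Finite ↥E := by
  rintro E ⟨H, hEH⟩ hE
  obtain ⟨π, hπ⟩ := exists_retraction_of_isCompl hEH
  have : AddGroup.FG F := Module.Finite.iff_addGroup_fg.mp <|
    .of_free_of_finiteRank (hA.1.of_injective (f := F.subtype) Subtype.val_injective)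
  obtain ⟨N, hN0, hNF⟩ := exists_nsmul_map_eq_zero hE.1 (π.comp F.subtype)
  have hNE : ∀ x : E, N • x = 0 := hE.nsmul_eq_zero fun p hp a ha => by
    obtain ⟨y, f, hf, hay⟩ := htight.exists_eq_smul_add hp (congrArg Subtype.val ha)
    have hNf : N • π f = 0 := hNF ⟨f, hf⟩
    refine ⟨N • π y, ?_⟩
    calc N • a = N • π a := by rw [hπ]
      _ = N • (p • π y + π f) := by rw [hay, map_add, map_nsmul]
      _ = p • N • π y := by rw [smul_add, hNf, add_zero, smul_comm]
  refine ((finite_setOf_nsmul_eq_zero hA.2 hN0).subset fun x hx => ?_).to_subtype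
  exact congrArg Subtype.val (hNE ⟨x, hx⟩)

/-- if A is Bassian with a 0-tight free subgroup F such that A/F is
torsion, then every elementary direct summand of A is finite. -/
theorem stmt17 {A : Type*} [AddCommGroup A] (hA : Bassian A) (F : AddSubgroup A)
    (hfree : Module.Free ℤ ↥F) (htor : AddMonoid.IsTorsion (A ⧸ F))
    (htight : ZeroTight F) :
    ∀ E : AddSubgroup A, (∃ H, IsCompl E H) → Elementary ↥E → Finite ↥E :=
  stmt17_general hA F hfree htight
end
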